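/- Let f be a terminating feasible flow over time in a single-sink network. Then for every edge e ∈ E one has ∫₀^{Θ(f)} c_e(θ) f⁺_e(θ) dθ = ∫₀^{Θ(f)} ( (θ + τ_e) f⁻_e(θ + τ_e) − θ f⁺_e(θ) ) dθ. -/

import Mathlib

open MeasureTheory Set

noncomputable section

/-- A single-sink network: a finite directed graph with integer travel times and
capacities on the edges, a sink node, and network inflow rates at the nodes
supported in `[0, theta0]`. -/
structure Network where
  V : Type
  E : Type
  fintypeV : Fintype V
  decV : DecidableEq V
  fintypeE : Fintype E
  decE : DecidableEq E
  src : E → V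
  dst : E → V
  sink : V
  tau : E → ℕ
  nu : E → ℕ
  tau_pos : ∀ e, 1 ≤ tau e
  nu_pos : ∀ e, 1 ≤ nu e
  theta0 : ℝ
  theta0_nonneg : 0 ≤ theta0
  u : V → ℝ → ℝ
  u_nonneg : ∀ v θ, 0 ≤ u v θ
  u_sink : ∀ θ, u sink θ = 0
  u_integrable : ∀ v, MeasureTheory.Integrable (u v) MeasureTheory.volume
  u_support : ∀ v θ, θ ∉ Set.Icc 0 theta0 → u v θ = 0

attribute [instance] Network.fintypeV Network.decV Network.fintypeE Network.decE

namespace Network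

variable (N : Network)

/-- `N.IsWalkBetween v w p` : the list of edges `p` forms a walk from `v` to `w`. -/
def IsWalkBetween : N.V → N.V → List N.E → Prop
  | v, w, [] => v = w
  | v, w, e :: p => N.src e = v ∧ IsWalkBetween (N.dst e) w p

/-- A walk from `v` to the sink. -/
def IsWalk (v : N.V) (p : List N.E) : Prop := N.IsWalkBetween v N.sink p

/-- The sink is reachable from every node. -/
def Reachable : Prop := ∀ v : N.V, ∃ p, N.IsWalk v p

/-- The graph has no (nonempty) cycles. -/
def Acyclic : Prop := ∀ v p, N.IsWalkBetween v v p → p = []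

/-- Total travel time `τ(G)` of the network. -/
def tauSum : ℝ := ∑ e, (N.tau e : ℝ)

/-- Physical length of a path. -/
def pathTau (p : List N.E) : ℝ := (p.map fun e => (N.tau e : ℝ)).sum

/-- `τ(P_max)`: the maximum physical length of a simple path ending at the sink. -/
def tauPmax : ℝ :=
  sSup { x | ∃ v p, N.IsWalk v p ∧ (v :: p.map N.dst).Nodup ∧ x = N.pathTau p }

/-- Edges leaving `v`. -/
def outEdges (v : N.V) : Finset N.E := Finset.univ.filter fun e => N.src e = v

/-- Edges entering `v`. -/
def inEdges (v : N.V) : Finset N.E := Finset.univ.filter fun e => N.dst e = v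

/-- Cumulative network inflow `U_v(θ)`. -/
def cumInflow (v : N.V) (θ : ℝ) : ℝ := ∫ ζ in (0:ℝ)..θ, N.u v ζ

/-- Total inflow volume `U`. -/
def totalInflow : ℝ := ∑ v ∈ Finset.univ.erase N.sink, N.cumInflow v N.theta0

/-- `p` is a physically shortest `v`-`t` path. -/
def PhysShortest (v : N.V) (p : List N.E) : Prop :=
  N.IsWalk v p ∧ ∀ p', N.IsWalk v p' → N.pathTau p ≤ N.pathTau p'

/-- Physical distance from `v` to the sink. -/
def physDist (v : N.V) : ℝ := sInf { x | ∃ p, N.IsWalk v p ∧ x = N.pathTau p }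

/-- `E(T)`: edges with both endpoints in `T`. -/
def edgesIn (T : Finset N.V) : Finset N.E :=
  Finset.univ.filter fun e => N.src e ∈ T ∧ N.dst e ∈ T

/-- `δ⁻_T`: edges entering `T`. -/
def deltaMinus (T : Finset N.V) : Finset N.E :=
  Finset.univ.filter fun e => N.src e ∉ T ∧ N.dst e ∈ T

/-- `δ⁺_T`: edges leaving `T`. -/
def deltaPlus (T : Finset N.V) : Finset N.E :=
  Finset.univ.filter fun e => N.src e ∈ T ∧ N.dst e ∉ T

/-- A flow over time: nonnegative, locally integrable edge in- and outflow rates,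
vanishing for negative times. -/
structure Flow (N : Network) where
  fp : N.E → ℝ → ℝ
  fm : N.E → ℝ → ℝ
  fp_nonneg : ∀ e θ, 0 ≤ fp e θ
  fm_nonneg : ∀ e θ, 0 ≤ fm e θ
  fp_zero : ∀ e θ, θ < 0 → fp e θ = 0
  fp_locInt : ∀ e, MeasureTheory.LocallyIntegrable (fp e) MeasureTheory.volume
  fm_locInt : ∀ e, MeasureTheory.LocallyIntegrable (fm e) MeasureTheory.volume

namespace Flow

variable {N : Network} (f : N.Flow)

/-- Cumulative edge inflow `F⁺_e`. -/
def Fp (e : N.E) (θ : ℝ) : ℝ := ∫ ζ in (0:ℝ)..θ, f.fp e ζ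

/-- Cumulative edge outflow `F⁻_e`. -/
def Fm (e : N.E) (θ : ℝ) : ℝ := ∫ ζ in (0:ℝ)..θ, f.fm e ζ

/-- Queue length `q_e(θ) = F⁺_e(θ) - F⁻_e(θ + τ_e)`. -/
def queue (e : N.E) (θ : ℝ) : ℝ := f.Fp e θ - f.Fm e (θ + (N.tau e : ℝ))

/-- Edge load `F^Δ_e(θ) = F⁺_e(θ) - F⁻_e(θ)`. -/
def load (e : N.E) (θ : ℝ) : ℝ := f.Fp e θ - f.Fm e θ

/-- Total flow volume in the network `F^Δ(θ)`. -/
def totalLoad (θ : ℝ) : ℝ := ∑ e, f.load e θ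

/-- Flow volume having reached the sink, `Z(θ)`. -/
def Z (θ : ℝ) : ℝ :=
  ∑ e ∈ N.inEdges N.sink, f.Fm e θ - ∑ e ∈ N.outEdges N.sink, f.Fp e θ

/-- Instantaneous travel time `c_e(θ) = τ_e + q_e(θ)/ν_e`. -/
def c (e : N.E) (θ : ℝ) : ℝ := (N.tau e : ℝ) + f.queue e θ / (N.nu e : ℝ)

/-- Node label `ℓ_v(θ)`: instantaneous distance from `v` to the sink. -/
def label (v : N.V) (θ : ℝ) : ℝ :=
  sInf { x | ∃ p, N.IsWalk v p ∧ x = (p.map fun e => f.c e θ).sum }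

/-- Edge `e` is active at time `θ`. -/
def Active (e : N.E) (θ : ℝ) : Prop :=
  f.label (N.src e) θ = f.label (N.dst e) θ + f.c e θ

/-- `p` is an active `v`-`t` path at time `θ`. -/
def ActivePath (v : N.V) (p : List N.E) (θ : ℝ) : Prop :=
  N.IsWalk v p ∧ ∀ e ∈ p, f.Active e θ

/-- Feasibility of a flow over time: flow conservation at non-sink nodes,
nonpositive excess at the sink, no outflow before `τ_e`, and queues operating
at capacity. -/
def Feasible : Prop :=
  (∀ v, v ≠ N.sink → ∀ᵐ θ ∂(volume : Measure ℝ), 0 ≤ θ →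
      (∑ e ∈ N.outEdges v, f.fp e θ) - ∑ e ∈ N.inEdges v, f.fm e θ = N.u v θ) ∧
  (∀ᵐ θ ∂(volume : Measure ℝ), 0 ≤ θ →
      (∑ e ∈ N.outEdges N.sink, f.fp e θ) - ∑ e ∈ N.inEdges N.sink, f.fm e θ ≤ 0) ∧
  (∀ e θ, θ < (N.tau e : ℝ) → f.fm e θ = 0) ∧
  (∀ e, ∀ᵐ θ ∂(volume : Measure ℝ), 0 ≤ θ →
      (0 < f.queue e θ → f.fm e (θ + (N.tau e : ℝ)) = (N.nu e : ℝ)) ∧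
      (f.queue e θ ≤ 0 → f.fm e (θ + (N.tau e : ℝ)) = min (f.fp e θ) (N.nu e : ℝ)))

/-- Instantaneous dynamic equilibrium: a feasible flow only using active edges. -/
def IsIDE : Prop :=
  f.Feasible ∧ ∀ e, ∀ᵐ θ ∂(volume : Measure ℝ), 0 ≤ θ → 0 < f.fp e θ → f.Active e θ

/-- The flow terminates. -/
def Terminates : Prop := ∃ θ, N.theta0 ≤ θ ∧ f.totalLoad θ = 0

/-- Makespan `Θ(f)`. -/
def makespan : ℝ := sInf { θ | N.theta0 ≤ θ ∧ f.totalLoad θ = 0 }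

/-- Total travel time `Ψ(f)`. -/
def totalTravelTime : ℝ := ∑ e, ∫ θ in Set.Ici (0:ℝ), f.c e θ * f.fp e θ

/-- The induced subgraph on `T` is sink-like on `[θ1, θ2]`. -/
def SinkLike (T : Finset N.V) (θ1 θ2 : ℝ) : Prop :=
  N.sink ∈ T ∧
  (∀ v ∈ T, ∀ p, N.PhysShortest v p → ∀ e ∈ p, N.src e ∈ T ∧ N.dst e ∈ T) ∧
  (∑ e ∈ N.edgesIn T, f.load e θ1) +
    (∑ e ∈ N.deltaMinus T, (f.Fm e θ2 - f.Fm e θ1)) +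
    (∑ v ∈ T.erase N.sink, ∫ θ in θ1..θ2, N.u v θ) < 1/2

end Flow

end Network


section AuxHelpers

lemma locInt_II {g : ℝ → ℝ} (hg : MeasureTheory.LocallyIntegrable g volume) (a b : ℝ) :
    IntervalIntegrable g volume a b := by
  rw [intervalIntegrable_iff]
  exact (hg.integrableOn_isCompact isCompact_uIcc).mono_set Set.uIoc_subset_uIcc

lemma swap_lemma {T : ℝ} {a b : ℝ → ℝ}
    (ha : MeasureTheory.IntegrableOn a (Set.Ioc 0 T) volume)
    (hb : MeasureTheory.IntegrableOn b (Set.Ioc 0 T) volume) :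
    ∫ θ in Set.Ioc (0:ℝ) T, (∫ ζ in Set.Ioc (0:ℝ) θ, a ζ) * b θ
      = ∫ ζ in Set.Ioc (0:ℝ) T, a ζ * ∫ θ in Set.Ioc ζ T, b θ := by
  set μ := volume.restrict (Set.Ioc (0:ℝ) T) with hμ
  have hmeas : MeasurableSet {q : ℝ × ℝ | q.2 ≤ q.1} :=
    measurableSet_le measurable_snd measurable_fst
  set F : ℝ × ℝ → ℝ :=
    fun p => ({q : ℝ × ℝ | q.2 ≤ q.1}).indicator (fun q => a q.2 * b q.1) p with hF
  have hbase : Integrable (fun p : ℝ × ℝ => a p.2 * b p.1) (μ.prod μ) := by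
    have h1 : Integrable (fun p : ℝ × ℝ => b p.1 * a p.2) (μ.prod μ) := hb.mul_prod ha
    simpa [mul_comm] using h1
  have hint : Integrable F (μ.prod μ) := hbase.indicator hmeas
  have swap := MeasureTheory.integral_integral_swap (f := fun θ ζ => F (θ, ζ)) hint
  have hL : (∫ θ, ∫ ζ, F (θ, ζ) ∂μ ∂μ)
      = ∫ θ in Set.Ioc (0:ℝ) T, (∫ ζ in Set.Ioc (0:ℝ) θ, a ζ) * b θ := by
    rw [hμ]
    apply setIntegral_congr_fun measurableSet_Ioc
    intro θ hθ
    show (∫ ζ in Set.Ioc (0:ℝ) T, F (θ, ζ)) = (∫ ζ in Set.Ioc (0:ℝ) θ, a ζ) * b θ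
    have h1 : (fun ζ => F (θ, ζ)) = (Set.Iic θ).indicator (fun ζ => a ζ * b θ) := by
      funext ζ
      simp [hF, Set.indicator_apply]
    rw [h1, integral_indicator measurableSet_Iic,
      Measure.restrict_restrict measurableSet_Iic]
    have h2 : Set.Iic θ ∩ Set.Ioc (0:ℝ) T = Set.Ioc 0 θ := by
      ext x
      simp only [Set.mem_inter_iff, Set.mem_Iic, Set.mem_Ioc]
      constructor
      · rintro ⟨h1', h2', _⟩; exact ⟨h2', h1'⟩
      · rintro ⟨h1', h2'⟩; exact ⟨h2', h1', h2'.trans hθ.2⟩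
    rw [h2, integral_mul_const]
  have hR : (∫ ζ, ∫ θ, F (θ, ζ) ∂μ ∂μ)
      = ∫ ζ in Set.Ioc (0:ℝ) T, a ζ * ∫ θ in Set.Ioc ζ T, b θ := by
    rw [hμ]
    apply setIntegral_congr_fun measurableSet_Ioc
    intro ζ hζ
    show (∫ θ in Set.Ioc (0:ℝ) T, F (θ, ζ)) = a ζ * ∫ θ in Set.Ioc ζ T, b θ
    have h1 : (fun θ => F (θ, ζ)) = (Set.Ici ζ).indicator (fun θ => a ζ * b θ) := by
      funext θ
      simp [hF, Set.indicator_apply]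
    rw [h1, integral_indicator measurableSet_Ici,
      Measure.restrict_restrict measurableSet_Ici]
    have h2 : Set.Ici ζ ∩ Set.Ioc (0:ℝ) T = Set.Icc ζ T := by
      ext x
      simp only [Set.mem_inter_iff, Set.mem_Ici, Set.mem_Ioc, Set.mem_Icc]
      constructor
      · rintro ⟨h1', _, h3'⟩; exact ⟨h1', h3'⟩
      · rintro ⟨h1', h2'⟩; exact ⟨h1', lt_of_lt_of_le hζ.1 h1', h2'⟩
    rw [h2, integral_Icc_eq_integral_Ioc, integral_const_mul]
  rw [← hL, ← hR]; exact swap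

namespace Network.Flow

variable {N : Network} (f : N.Flow)

lemma fpII (e : N.E) (a b : ℝ) : IntervalIntegrable (f.fp e) volume a b :=
  locInt_II (f.fp_locInt e) a b

lemma fmII (e : N.E) (a b : ℝ) : IntervalIntegrable (f.fm e) volume a b :=
  locInt_II (f.fm_locInt e) a b

lemma fmShiftII (e : N.E) (c a b : ℝ) :
    IntervalIntegrable (fun θ => f.fm e (θ + c)) volume a b := by
  simpa using (f.fmII e (a + c) (b + c)).comp_add_right c

lemma Fp_cont (e : N.E) : Continuous (f.Fp e) :=
  intervalIntegral.continuous_primitive (fun a b => f.fpII e a b) 0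

lemma Fm_cont (e : N.E) : Continuous (f.Fm e) :=
  intervalIntegral.continuous_primitive (fun a b => f.fmII e a b) 0

lemma queue_cont (e : N.E) : Continuous (f.queue e) := by
  unfold Network.Flow.queue
  exact (f.Fp_cont e).sub ((f.Fm_cont e).comp (continuous_id.add continuous_const))

lemma load_cont (e : N.E) : Continuous (f.load e) :=
  (f.Fp_cont e).sub (f.Fm_cont e)

lemma Fm_sub (e : N.E) (a b : ℝ) :
    f.Fm e b - f.Fm e a = ∫ θ in a..b, f.fm e θ := by
  have h := intervalIntegral.integral_add_adjacent_intervals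
    (f.fmII e 0 a) (f.fmII e a b)
  unfold Network.Flow.Fm
  linarith

lemma Fp_sub (e : N.E) (a b : ℝ) :
    f.Fp e b - f.Fp e a = ∫ θ in a..b, f.fp e θ := by
  have h := intervalIntegral.integral_add_adjacent_intervals
    (f.fpII e 0 a) (f.fpII e a b)
  unfold Network.Flow.Fp
  linarith

lemma Fm_mono (e : N.E) {a b : ℝ} (hab : a ≤ b) : f.Fm e a ≤ f.Fm e b := by
  have h := f.Fm_sub e a b
  have h2 : 0 ≤ ∫ θ in a..b, f.fm e θ :=
    intervalIntegral.integral_nonneg hab (fun u _ => f.fm_nonneg e u)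
  linarith

lemma Fm_zero (hf : f.Feasible) (e : N.E) {θ : ℝ} (h : θ ≤ (N.tau e : ℝ)) : f.Fm e θ = 0 := by
  have htau : (1:ℝ) ≤ (N.tau e : ℝ) := by exact_mod_cast N.tau_pos e
  have hae : ∀ᵐ ζ ∂(volume : Measure ℝ), ζ ∈ Set.uIoc 0 θ → f.fm e ζ = 0 := by
    have hsing : (volume : Measure ℝ) {(N.tau e : ℝ)} = 0 := Real.volume_singleton
    have hne : ∀ᵐ ζ ∂(volume : Measure ℝ), ζ ≠ (N.tau e : ℝ) := by
      rw [ae_iff]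
      convert hsing using 2
      ext x; simp
    filter_upwards [hne] with ζ hζ hmem
    apply hf.2.2.1 e
    rcases Set.mem_uIoc.1 hmem with h1 | h1
    · exact lt_of_le_of_ne (h1.2.trans h) hζ
    · exact lt_of_le_of_lt h1.2 (lt_of_lt_of_le one_pos htau)
  unfold Network.Flow.Fm
  rw [intervalIntegral.integral_congr_ae hae]
  simp

lemma queue_primitive (hf : f.Feasible) (e : N.E) (θ : ℝ) :
    f.queue e θ = ∫ ζ in (0:ℝ)..θ, (f.fp e ζ - f.fm e (ζ + (N.tau e : ℝ))) := by
  rw [intervalIntegral.integral_sub (f.fpII e 0 θ) (f.fmShiftII e _ 0 θ)]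
  have h1 : (∫ ζ in (0:ℝ)..θ, f.fm e (ζ + (N.tau e : ℝ)))
      = ∫ ζ in (N.tau e : ℝ)..(θ + (N.tau e : ℝ)), f.fm e ζ := by
    simpa using intervalIntegral.integral_comp_add_right (f.fm e) (N.tau e : ℝ)
  rw [h1, ← f.Fm_sub e, f.Fm_zero hf e (le_refl _)]
  unfold Network.Flow.queue Network.Flow.Fp
  ring

lemma queue_zero (hf : f.Feasible) (e : N.E) : f.queue e 0 = 0 := by
  rw [f.queue_primitive hf e 0, intervalIntegral.integral_same]

lemma queue_nonneg (hf : f.Feasible) (e : N.E) {θ₁ : ℝ} (hθ₁ : 0 ≤ θ₁) :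
    0 ≤ f.queue e θ₁ := by
  by_contra hneg
  push_neg at hneg
  set A := Set.Icc (0:ℝ) θ₁ ∩ {θ | 0 ≤ f.queue e θ} with hA
  have hAne : A.Nonempty := ⟨0, ⟨Set.mem_Icc.2 ⟨le_refl 0, hθ₁⟩, by
    simp only [Set.mem_setOf_eq, f.queue_zero hf e, le_refl]⟩⟩
  have hAclosed : IsClosed A :=
    isClosed_Icc.inter (isClosed_le continuous_const (f.queue_cont e))
  have hAbdd : BddAbove A := ⟨θ₁, fun x hx => hx.1.2⟩
  set s := sSup A with hs
  have hsA : s ∈ A := hAclosed.csSup_mem hAne hAbdd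
  have hs0 : 0 ≤ s := hsA.1.1
  have hsθ : s ≤ θ₁ := hsA.1.2
  have hslt : s < θ₁ := by
    rcases lt_or_eq_of_le hsθ with h | h
    · exact h
    · exfalso; rw [h] at hsA; exact absurd hsA.2 (not_le.2 hneg)
  have hint : 0 ≤ ∫ ζ in s..θ₁, (f.fp e ζ - f.fm e (ζ + (N.tau e : ℝ))) := by
    rw [intervalIntegral.integral_of_le hslt.le]
    apply setIntegral_nonneg_of_ae_restrict
    have haer := ae_restrict_of_ae (μ := (volume : Measure ℝ))
      (s := Set.Ioc s θ₁) (hf.2.2.2 e)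
    have hmem : ∀ᵐ ζ ∂((volume : Measure ℝ).restrict (Set.Ioc s θ₁)),
        ζ ∈ Set.Ioc s θ₁ := ae_restrict_mem measurableSet_Ioc
    filter_upwards [haer, hmem] with ζ h hζ
    have hζ0 : 0 ≤ ζ := le_trans hs0 hζ.1.le
    have hζA : ζ ∉ A := fun hin => absurd (le_csSup hAbdd hin) (not_le.2 hζ.1)
    have hqneg : f.queue e ζ ≤ 0 := by
      by_contra hpos
      push_neg at hpos
      exact hζA ⟨Set.mem_Icc.2 ⟨hζ0, hζ.2⟩, le_of_lt hpos⟩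
    have h2 := (h hζ0).2 hqneg
    simp only [Pi.zero_apply, h2]
    have h3 := min_le_left (f.fp e ζ) ((N.nu e) : ℝ)
    linarith
  have hdiff : f.queue e θ₁ - f.queue e s
      = ∫ ζ in s..θ₁, (f.fp e ζ - f.fm e (ζ + (N.tau e : ℝ))) := by
    rw [f.queue_primitive hf e θ₁, f.queue_primitive hf e s]
    have h := intervalIntegral.integral_add_adjacent_intervals
      ((f.fpII e 0 s).sub (f.fmShiftII e (N.tau e : ℝ) 0 s))
      ((f.fpII e s θ₁).sub (f.fmShiftII e (N.tau e : ℝ) s θ₁))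
    linarith
  have h4 : 0 ≤ f.queue e s := hsA.2
  linarith

end Network.Flow

end AuxHelpers

/-- the per-edge travel time identity
`∫₀^{Θ(f)} c_e(θ) f⁺_e(θ) dθ = ∫₀^{Θ(f)} ((θ+τ_e) f⁻_e(θ+τ_e) − θ f⁺_e(θ)) dθ`. -/
theorem edge_travel_time_identity (N : Network) (hreach : N.Reachable)
    (f : N.Flow) (hf : f.Feasible) (hterm : f.Terminates) (e : N.E) :
    ∫ θ in (0:ℝ)..f.makespan, f.c e θ * f.fp e θ =
      ∫ θ in (0:ℝ)..f.makespan,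
        ((θ + (N.tau e : ℝ)) * f.fm e (θ + (N.tau e : ℝ)) - θ * f.fp e θ) := by
  classical
  obtain ⟨θa, hθa⟩ := hterm
  set T := f.makespan with hTdef
  set τ : ℝ := (N.tau e : ℝ) with hτdef
  set ν : ℝ := (N.nu e : ℝ) with hνdef
  have hτ1 : (1:ℝ) ≤ τ := by rw [hτdef]; exact_mod_cast N.tau_pos e
  have hτ0 : (0:ℝ) < τ := lt_of_lt_of_le one_pos hτ1
  have hν0 : (0:ℝ) < ν := by
    have : (1:ℝ) ≤ ν := by rw [hνdef]; exact_mod_cast N.nu_pos e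
    linarith
  have hae_ne : ∀ c : ℝ, ∀ᵐ x : ℝ ∂(volume : Measure ℝ), x ≠ c := by
    intro c
    rw [ae_iff]
    have : {x : ℝ | ¬x ≠ c} = {c} := by ext x; simp
    rw [this]
    exact Real.volume_singleton
  -- makespan facts
  have hTLcont : Continuous f.totalLoad := by
    unfold Network.Flow.totalLoad
    exact continuous_finset_sum _ (fun e' _ => f.load_cont e')
  have hTmem : N.theta0 ≤ T ∧ f.totalLoad T = 0 := by
    have hclosed : IsClosed {θ : ℝ | N.theta0 ≤ θ ∧ f.totalLoad θ = 0} := by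
      have heq : {θ : ℝ | N.theta0 ≤ θ ∧ f.totalLoad θ = 0}
          = {θ : ℝ | N.theta0 ≤ θ} ∩ {θ : ℝ | f.totalLoad θ = 0} := rfl
      rw [heq]
      exact (isClosed_le continuous_const continuous_id).inter
        (isClosed_eq hTLcont continuous_const)
    exact hclosed.csInf_mem ⟨θa, hθa⟩ ⟨N.theta0, fun x hx => hx.1⟩
  have hT0 : 0 ≤ T := le_trans N.theta0_nonneg hTmem.1
  -- loads at T vanish
  have hloadnn : ∀ e' : N.E, 0 ≤ f.load e' T := by
    intro e'
    have hq := f.queue_nonneg hf e' hT0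
    have hτ'0 : (0:ℝ) ≤ (N.tau e' : ℝ) := Nat.cast_nonneg _
    have hm : f.Fm e' T ≤ f.Fm e' (T + (N.tau e' : ℝ)) :=
      f.Fm_mono e' (le_add_of_nonneg_right hτ'0)
    unfold Network.Flow.load
    unfold Network.Flow.queue at hq
    linarith
  have hloadT : f.load e T = 0 := by
    have hsum : ∑ e' : N.E, f.load e' T = 0 := hTmem.2
    exact (Finset.sum_eq_zero_iff_of_nonneg (fun e' _ => hloadnn e')).1 hsum e
      (Finset.mem_univ e)
  have hFpFmT : f.Fp e T = f.Fm e T := by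
    unfold Network.Flow.load at hloadT; linarith
  have hqT : f.queue e T = 0 := by
    have h1 := f.queue_nonneg hf e hT0
    have h2 : f.Fm e T ≤ f.Fm e (T + τ) := f.Fm_mono e (le_add_of_nonneg_right hτ0.le)
    unfold Network.Flow.queue at h1 ⊢
    linarith
  have hFmTτ : f.Fm e (T + τ) = f.Fm e T := by
    unfold Network.Flow.queue at hqT; linarith
  -- abbreviation g
  set g : ℝ → ℝ := fun θ => f.fp e θ - f.fm e (θ + τ) with hgdef
  have hgII : ∀ a b : ℝ, IntervalIntegrable g volume a b :=
    fun a b => (f.fpII e a b).sub (f.fmShiftII e τ a b)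
  have hqprim : ∀ θ : ℝ, f.queue e θ = ∫ ζ in (0:ℝ)..θ, g ζ :=
    fun θ => f.queue_primitive hf e θ
  -- fm vanishes a.e. on (T, T+τ]
  have hfm_tail0 : ∀ᵐ ζ ∂((volume : Measure ℝ).restrict (Set.Ioc T (T+τ))),
      f.fm e ζ = 0 := by
    have hint0 : ∫ ζ in Set.Ioc T (T+τ), f.fm e ζ = 0 := by
      have h1 := f.Fm_sub e T (T+τ)
      rw [intervalIntegral.integral_of_le (by linarith : T ≤ T + τ)] at h1
      linarith
    have hii : MeasureTheory.IntegrableOn (f.fm e) (Set.Ioc T (T+τ)) volume := by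
      have h1 := intervalIntegrable_iff.1 (f.fmII e T (T+τ))
      rwa [Set.uIoc_of_le (by linarith : T ≤ T + τ)] at h1
    exact (integral_eq_zero_iff_of_nonneg_ae
      (Filter.Eventually.of_forall (fun ζ => f.fm_nonneg e ζ)) hii).1 hint0
  -- ∫₀^T q·g = 0  (Fubini symmetry)
  have hqg0 : ∫ θ in (0:ℝ)..T, f.queue e θ * g θ = 0 := by
    have hgIO : MeasureTheory.IntegrableOn g (Set.Ioc 0 T) volume := by
      have h1 := intervalIntegrable_iff.1 (hgII 0 T)
      rwa [Set.uIoc_of_le hT0] at h1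
    have hswap := swap_lemma hgIO hgIO
    have hL : ∫ θ in Set.Ioc (0:ℝ) T, (∫ ζ in Set.Ioc (0:ℝ) θ, g ζ) * g θ
        = ∫ θ in Set.Ioc (0:ℝ) T, f.queue e θ * g θ := by
      apply setIntegral_congr_fun measurableSet_Ioc
      intro θ hθ
      show (∫ ζ in Set.Ioc (0:ℝ) θ, g ζ) * g θ = f.queue e θ * g θ
      rw [← intervalIntegral.integral_of_le hθ.1.le, ← hqprim θ]
    have hR : ∫ ζ in Set.Ioc (0:ℝ) T, g ζ * ∫ θ in Set.Ioc ζ T, g θ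
        = ∫ ζ in Set.Ioc (0:ℝ) T, -(f.queue e ζ * g ζ) := by
      apply setIntegral_congr_fun measurableSet_Ioc
      intro ζ hζ
      show g ζ * (∫ θ in Set.Ioc ζ T, g θ) = -(f.queue e ζ * g ζ)
      have h2 : ∫ θ in Set.Ioc ζ T, g θ = - f.queue e ζ := by
        rw [← intervalIntegral.integral_of_le hζ.2]
        have h3 := intervalIntegral.integral_add_adjacent_intervals
          (hgII 0 ζ) (hgII ζ T)
        have h4 := hqprim ζ
        have h5 := hqprim T
        rw [hqT] at h5
        linarith
      rw [h2]; ring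
    rw [hL, hR, integral_neg] at hswap
    rw [intervalIntegral.integral_of_le hT0]
    linarith
  -- LHS
  have hqfpII : IntervalIntegrable (fun θ => f.queue e θ * f.fp e θ) volume 0 T :=
    (f.fpII e 0 T).continuousOn_mul ((f.queue_cont e).continuousOn)
  have hqgII : IntervalIntegrable (fun θ => f.queue e θ * g θ) volume 0 T :=
    (hgII 0 T).continuousOn_mul ((f.queue_cont e).continuousOn)
  have hqII : IntervalIntegrable (f.queue e) volume 0 T :=
    (f.queue_cont e).intervalIntegrable 0 T
  have hkey : ∫ θ in (0:ℝ)..T, f.queue e θ * f.fp e θ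
      = ν * ∫ θ in (0:ℝ)..T, f.queue e θ := by
    have hstep1 : ∫ θ in (0:ℝ)..T, f.queue e θ * f.fp e θ
        = ∫ θ in (0:ℝ)..T, (f.queue e θ * g θ + ν * f.queue e θ) := by
      apply intervalIntegral.integral_congr_ae
      filter_upwards [hf.2.2.2 e] with θ h hmem
      rw [Set.uIoc_of_le hT0] at hmem
      have hθ0 : 0 ≤ θ := le_of_lt hmem.1
      have hqnn := f.queue_nonneg hf e hθ0
      rcases lt_or_eq_of_le hqnn with hpos | heq
      · have hfm := (h hθ0).1 hpos
        simp only [hgdef]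
        rw [hfm]
        ring
      · rw [← heq]; ring_nf
    rw [hstep1, intervalIntegral.integral_add hqgII (hqII.const_mul ν),
      intervalIntegral.integral_const_mul, hqg0, zero_add]
  have hFpT : ∫ θ in (0:ℝ)..T, f.fp e θ = f.Fp e T := rfl
  have hLHS : ∫ θ in (0:ℝ)..T, f.c e θ * f.fp e θ
      = τ * f.Fp e T + ∫ θ in (0:ℝ)..T, f.queue e θ := by
    have hcongr : Set.EqOn (fun θ => f.c e θ * f.fp e θ)
        (fun θ => τ * f.fp e θ + (1/ν) * (f.queue e θ * f.fp e θ)) (Set.uIcc 0 T) := by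
      intro θ _
      show f.c e θ * f.fp e θ = τ * f.fp e θ + (1/ν) * (f.queue e θ * f.fp e θ)
      unfold Network.Flow.c
      simp only [← hνdef, ← hτdef]
      ring
    rw [intervalIntegral.integral_congr hcongr,
      intervalIntegral.integral_add ((f.fpII e 0 T).const_mul τ)
        (hqfpII.const_mul (1/ν)),
      intervalIntegral.integral_const_mul, intervalIntegral.integral_const_mul,
      hkey, hFpT]
    field_simp
  -- tail integrals of s * fm s
  have htail0 : ∫ s in T..(T+τ), s * f.fm e s = 0 := by
    rw [intervalIntegral.integral_of_le (by linarith : T ≤ T + τ)]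
    apply MeasureTheory.integral_eq_zero_of_ae
    filter_upwards [hfm_tail0] with ζ h
    simp [h]
  have hhead0 : ∫ s in (0:ℝ)..τ, s * f.fm e s = 0 := by
    have hcongr : ∀ᵐ x ∂(volume : Measure ℝ), x ∈ Set.uIoc 0 τ →
        (fun s => s * f.fm e s) x = (fun _ => (0:ℝ)) x := by
      filter_upwards [hae_ne τ] with ζ hζ hmem
      rw [Set.uIoc_of_le hτ0.le] at hmem
      have : f.fm e ζ = 0 := hf.2.2.1 e ζ (lt_of_le_of_ne hmem.2 hζ)
      simp [this]
    rw [intervalIntegral.integral_congr_ae hcongr]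
    simp
  have hsfmII : ∀ a b : ℝ, IntervalIntegrable (fun s => s * f.fm e s) volume a b :=
    fun a b => (f.fmII e a b).continuousOn_mul continuousOn_id
  -- shift the fm term
  have hshift : ∫ θ in (0:ℝ)..T, (θ + τ) * f.fm e (θ + τ)
      = ∫ s in (0:ℝ)..T, s * f.fm e s := by
    have h1 : ∫ θ in (0:ℝ)..T, (θ + τ) * f.fm e (θ + τ)
        = ∫ s in τ..(T+τ), s * f.fm e s := by
      have := intervalIntegral.integral_comp_add_right (fun s => s * f.fm e s) τ
        (a := 0) (b := T)
      simpa using this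
    have h2 := intervalIntegral.integral_add_adjacent_intervals
      (hsfmII τ 0) (hsfmII 0 (T+τ))
    have h3 := intervalIntegral.integral_add_adjacent_intervals
      (hsfmII 0 T) (hsfmII T (T+τ))
    have h4 : ∫ s in τ..(0:ℝ), s * f.fm e s = 0 := by
      rw [intervalIntegral.integral_symm, hhead0, neg_zero]
    rw [h1]
    linarith
  -- integration by parts via Fubini
  set h : ℝ → ℝ := fun θ => f.fm e θ - f.fp e θ with hhdef
  have hhII : ∀ a b : ℝ, IntervalIntegrable h volume a b :=
    fun a b => (f.fmII e a b).sub (f.fpII e a b)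
  have hH : ∀ θ : ℝ, (∫ ζ in (0:ℝ)..θ, h ζ) = - f.load e θ := by
    intro θ
    rw [intervalIntegral.integral_sub (f.fmII e 0 θ) (f.fpII e 0 θ)]
    unfold Network.Flow.load Network.Flow.Fm Network.Flow.Fp
    ring
  have hparts : ∫ θ in (0:ℝ)..T, θ * h θ = ∫ θ in (0:ℝ)..T, f.load e θ := by
    have hhIO : MeasureTheory.IntegrableOn h (Set.Ioc 0 T) volume := by
      have h1 := intervalIntegrable_iff.1 (hhII 0 T)
      rwa [Set.uIoc_of_le hT0] at h1
    have honeIO : MeasureTheory.IntegrableOn (fun _ : ℝ => (1:ℝ)) (Set.Ioc 0 T)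
        volume := by
      exact MeasureTheory.integrableOn_const measure_Ioc_lt_top.ne (by simp)
    have hswap := swap_lemma hhIO honeIO
    have hL : ∫ θ in Set.Ioc (0:ℝ) T, (∫ ζ in Set.Ioc (0:ℝ) θ, h ζ) * 1
        = ∫ θ in Set.Ioc (0:ℝ) T, (- f.load e θ) := by
      apply setIntegral_congr_fun measurableSet_Ioc
      intro θ hθ
      show (∫ ζ in Set.Ioc (0:ℝ) θ, h ζ) * 1 = - f.load e θ
      rw [← intervalIntegral.integral_of_le hθ.1.le, hH θ, mul_one]
    have hR : ∫ ζ in Set.Ioc (0:ℝ) T, h ζ * ∫ θ in Set.Ioc ζ T, (1:ℝ)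
        = ∫ ζ in Set.Ioc (0:ℝ) T, (T * h ζ - ζ * h ζ) := by
      apply setIntegral_congr_fun measurableSet_Ioc
      intro ζ hζ
      show h ζ * (∫ θ in Set.Ioc ζ T, (1:ℝ)) = T * h ζ - ζ * h ζ
      rw [setIntegral_const, measureReal_def, Real.volume_Ioc,
        ENNReal.toReal_ofReal (by linarith [hζ.2] : (0:ℝ) ≤ T - ζ)]
      simp only [smul_eq_mul, mul_one]
      ring
    rw [hL, hR] at hswap
    have hζhIO : MeasureTheory.IntegrableOn (fun ζ : ℝ => ζ * h ζ) (Set.Ioc 0 T)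
        volume := by
      have h1 := intervalIntegrable_iff.1 ((hhII 0 T).continuousOn_mul continuousOn_id)
      rwa [Set.uIoc_of_le hT0] at h1
    rw [integral_neg, MeasureTheory.integral_sub (hhIO.const_mul T) hζhIO,
      MeasureTheory.integral_const_mul] at hswap
    have hh0 : ∫ ζ in Set.Ioc (0:ℝ) T, h ζ = 0 := by
      rw [← intervalIntegral.integral_of_le hT0, hH T, hloadT, neg_zero]
    rw [hh0, mul_zero, zero_sub] at hswap
    rw [intervalIntegral.integral_of_le hT0, intervalIntegral.integral_of_le hT0]
    linarith
  -- RHS reduces to ∫ load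
  have hRHS : ∫ θ in (0:ℝ)..T, ((θ + τ) * f.fm e (θ + τ) - θ * f.fp e θ)
      = ∫ θ in (0:ℝ)..T, f.load e θ := by
    have hshII : IntervalIntegrable (fun θ => (θ + τ) * f.fm e (θ + τ)) volume 0 T := by
      have := (hsfmII τ (T + τ)).comp_add_right τ
      simpa using this
    have hθfpII : IntervalIntegrable (fun θ => θ * f.fp e θ) volume 0 T :=
      (f.fpII e 0 T).continuousOn_mul continuousOn_id
    rw [intervalIntegral.integral_sub hshII hθfpII, hshift,
      ← intervalIntegral.integral_sub (hsfmII 0 T) hθfpII]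
    have hcongr : Set.EqOn (fun θ : ℝ => θ * f.fm e θ - θ * f.fp e θ)
        (fun θ => θ * h θ) (Set.uIcc 0 T) := by
      intro θ _
      show θ * f.fm e θ - θ * f.fp e θ = θ * h θ
      simp only [hhdef]
      ring
    rw [intervalIntegral.integral_congr hcongr, hparts]
  -- bridge: ∫ load = τ·Fp T + ∫ queue
  have hbridge : ∫ θ in (0:ℝ)..T, f.load e θ
      = τ * f.Fp e T + ∫ θ in (0:ℝ)..T, f.queue e θ := by
    have hFmIIc : ∀ a b : ℝ, IntervalIntegrable (f.Fm e) volume a b :=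
      fun a b => (f.Fm_cont e).intervalIntegrable a b
    have hFmshIIc : IntervalIntegrable (fun θ => f.Fm e (θ + τ)) volume 0 T :=
      ((f.Fm_cont e).comp (continuous_id.add continuous_const)).intervalIntegrable 0 T
    have hloadII : IntervalIntegrable (f.load e) volume 0 T :=
      (f.load_cont e).intervalIntegrable 0 T
    have hd : Set.EqOn (fun θ => f.load e θ - f.queue e θ)
        (fun θ => f.Fm e (θ + τ) - f.Fm e θ) (Set.uIcc 0 T) := by
      intro θ _
      show f.load e θ - f.queue e θ = f.Fm e (θ + τ) - f.Fm e θ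
      unfold Network.Flow.load Network.Flow.queue
      ring
    have h1 : ∫ θ in (0:ℝ)..T, (f.load e θ - f.queue e θ)
        = (∫ θ in (0:ℝ)..T, f.Fm e (θ + τ)) - ∫ θ in (0:ℝ)..T, f.Fm e θ := by
      rw [intervalIntegral.integral_congr hd,
        intervalIntegral.integral_sub hFmshIIc (hFmIIc 0 T)]
    have h2 : ∫ θ in (0:ℝ)..T, f.Fm e (θ + τ) = ∫ s in τ..(T+τ), f.Fm e s := by
      have := intervalIntegral.integral_comp_add_right (f.Fm e) τ (a := 0) (b := T)
      simpa using this
    have h3 := intervalIntegral.integral_add_adjacent_intervals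
      (hFmIIc τ 0) (hFmIIc 0 (T+τ))
    have h4 := intervalIntegral.integral_add_adjacent_intervals
      (hFmIIc 0 T) (hFmIIc T (T+τ))
    have h5 : ∫ s in (0:ℝ)..τ, f.Fm e s = 0 := by
      have hc : Set.EqOn (f.Fm e) (fun _ => (0:ℝ)) (Set.uIcc 0 τ) := by
        intro s hs
        rw [Set.uIcc_of_le hτ0.le] at hs
        exact f.Fm_zero hf e hs.2
      rw [intervalIntegral.integral_congr hc]
      simp
    have h6 : ∫ s in T..(T+τ), f.Fm e s = τ * f.Fm e T := by
      have hc : Set.EqOn (f.Fm e) (fun _ => f.Fm e T) (Set.uIcc T (T+τ)) := by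
        intro s hs
        rw [Set.uIcc_of_le (by linarith : T ≤ T + τ)] at hs
        have hle1 : f.Fm e T ≤ f.Fm e s := f.Fm_mono e hs.1
        have hle2 : f.Fm e s ≤ f.Fm e (T + τ) := f.Fm_mono e hs.2
        rw [hFmTτ] at hle2
        linarith
      rw [intervalIntegral.integral_congr hc, intervalIntegral.integral_const]
      simp only [smul_eq_mul]
      ring
    have h7 : ∫ s in τ..(0:ℝ), f.Fm e s = 0 := by
      rw [intervalIntegral.integral_symm, h5, neg_zero]
    have h8 : ∫ θ in (0:ℝ)..T, (f.load e θ - f.queue e θ) = τ * f.Fm e T := by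
      rw [h1, h2]
      linarith
    have h9 := intervalIntegral.integral_sub hloadII hqII
    rw [hFpFmT]
    linarith [h8, h9 ▸ h8]
  rw [hLHS, ← hbridge, hRHS]

end
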